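/- arXiv:2009.09511 — 6 statements merged into one kernel-verified Lean document; each statement's English description precedes it below -/
import Mathlib

section
/- Let A be n×n, B n×m, K m×n, D n×d real matrices and γ > 0. Suppose S := A − BK is Schur stable, Q (n×n) and R (m×m) are symmetric positive semidefinite, and P is a real symmetric positive semidefinite n×n matrix such that γ²I_d − Dᵀ P D is positive definite and P solves the modified Riccati equation Sᵀ P̃ S + Q + Kᵀ R K = P, where P̃ := P + P D (γ²I_d − Dᵀ P D)⁻¹ Dᵀ P. Let P̄ := Σ_{i=0}^∞ (Sᵀ)^i (Q + Kᵀ R K) S^i be the solution of the Lyapunov equation Sᵀ P̄ S − P̄ = −(Q + Kᵀ R K). Then P − P̄ = Σ_{i=0}^∞ (Sᵀ)^{i+1} (P D (γ²I_d − Dᵀ P D)⁻¹ Dᵀ P) S^{i+1}; in particular P − P̄ is positive semidefinite, so P ≥ P̄. -/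
open Matrix

/-- A real square matrix is Schur stable if every eigenvalue of it,
viewed as a complex matrix, has modulus strictly less than 1. -/
def SchurStable {k : ℕ} (S : Matrix (Fin k) (Fin k) ℝ) : Prop :=
  ∀ μ ∈ spectrum ℂ (S.map (algebraMap ℝ ℂ)), ‖μ‖ < 1

/-!
Writing `X := P D (γ²I − Dᵀ P D)⁻¹ Dᵀ P`, the modified Riccati equation says that `P` solves the
Lyapunov equation `Sᵀ P S + (Q + Kᵀ R K + Sᵀ X S) = P`. For a Schur stable `S` (whose powers
decay geometrically, by Gelfand's formula) the solution of `Sᵀ P S + G = P` is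
`Σ (Sᵀ)^i G S^i`, so subtracting the series for `P̄` leaves `Σ (Sᵀ)^(i+1) X S^(i+1)`, a convergent
sum of congruences of the positive semidefinite matrix `X`.
-/

open Filter Finset
open scoped NNReal ENNReal ComplexOrder

theorem eventually_nnnorm_pow_le_of_spectralRadius_lt {A : Type*} [NormedRing A]
    [NormedAlgebra ℂ A] [CompleteSpace A] {a : A} {r : ℝ≥0} (h : spectralRadius ℂ a < r) :
    ∀ᶠ n in atTop, ‖a ^ n‖₊ ≤ r ^ n := by
  filter_upwards [(spectrum.gelfand_formula a).eventually_lt_const h, eventually_gt_atTop 0]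
    with n hn hpos
  rw [one_div, ENNReal.rpow_inv_lt_iff (by positivity), ENNReal.rpow_natCast] at hn
  exact_mod_cast hn.le

theorem Matrix.isClosed_setOf_posSemidef {n 𝕜 : Type*} [Fintype n] [RCLike 𝕜] :
    IsClosed {M : Matrix n n 𝕜 | M.PosSemidef} := by
  simp only [posSemidef_iff_dotProduct_mulVec, IsHermitian, Set.ofPred_and, Set.ofPred_forall]
  exact (isClosed_eq continuous_id.matrix_conjTranspose continuous_id).inter
    (isClosed_iInter fun x => isClosed_le continuous_const
      (continuous_const.dotProduct (continuous_id.matrix_mulVec continuous_const)))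

theorem HasSum.posSemidef {ι n 𝕜 : Type*} [Fintype n] [RCLike 𝕜] {f : ι → Matrix n n 𝕜}
    {a : Matrix n n 𝕜} (hf : HasSum f a) (h : ∀ i, (f i).PosSemidef) : a.PosSemidef :=
  isClosed_setOf_posSemidef.mem_of_tendsto hf
    (Eventually.of_forall fun s => posSemidef_sum s fun i _ => h i)

theorem sum_pow_mul_mul_pow_add_pow_mul_mul_pow {α : Type*} [Semiring α] {a b p g : α}
    (h : a * p * b + g = p) (N : ℕ) :
    ∑ i ∈ range N, a ^ i * g * b ^ i + a ^ N * p * b ^ N = p := by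
  induction N with
  | zero => simp
  | succ N ih =>
    have hstep : a ^ N * g * b ^ N + a ^ (N + 1) * p * b ^ (N + 1) = a ^ N * p * b ^ N := by
      conv_rhs => rw [← h]
      rw [pow_succ, pow_succ']
      simp only [mul_add, add_mul, mul_assoc]
      exact add_comm _ _
    rw [sum_range_succ, add_assoc, hstep, ih]

namespace SchurStable

variable {k : ℕ} {S : Matrix (Fin k) (Fin k) ℝ}

section Frobenius

-- The Frobenius norm is submultiplicative and invariant under transposition.
attribute [local instance] Matrix.frobeniusNormedAddCommGroup Matrix.frobeniusNormedSpace
  Matrix.frobeniusNormedRing Matrix.frobeniusNormedAlgebra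

theorem spectralRadius_lt_one (hS : SchurStable S) :
    spectralRadius ℂ (S.map (algebraMap ℝ ℂ)) < 1 := by
  rcases (spectrum ℂ (S.map (algebraMap ℝ ℂ))).eq_empty_or_nonempty with h | h
  · rw [spectralRadius, h]
    simp
  · exact_mod_cast spectrum.spectralRadius_lt_of_forall_lt_of_nonempty h (r := 1)
      fun μ hμ => mod_cast hS μ hμ

theorem exists_nnnorm_pow_le (hS : SchurStable S) :
    ∃ r : ℝ≥0, r < 1 ∧ ∀ᶠ i in atTop, ‖S ^ i‖₊ ≤ r ^ i := by
  obtain ⟨r, hρ, hr⟩ := ENNReal.lt_iff_exists_nnreal_btwn.mp hS.spectralRadius_lt_one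
  refine ⟨r, mod_cast hr, ?_⟩
  filter_upwards [eventually_nnnorm_pow_le_of_spectralRadius_lt hρ] with i hi
  rwa [← RingHom.mapMatrix_apply, ← map_pow, RingHom.mapMatrix_apply,
    frobenius_nnnorm_map_eq _ _ fun x => by simp] at hi

theorem summable_transpose_pow_mul_mul_pow (hS : SchurStable S)
    (M : Matrix (Fin k) (Fin k) ℝ) : Summable fun i : ℕ => Sᵀ ^ i * M * S ^ i := by
  obtain ⟨r, hr, hpow⟩ := hS.exists_nnnorm_pow_le
  refine Summable.of_norm_bounded_eventually_nat ((summable_geometric_of_lt_one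
    (by positivity) (pow_lt_one₀ r.2 hr two_ne_zero)).mul_left ‖M‖) ?_
  filter_upwards [hpow] with i hi
  have hi' : ‖S ^ i‖ ≤ (r : ℝ) ^ i := mod_cast hi
  calc ‖Sᵀ ^ i * M * S ^ i‖ ≤ ‖Sᵀ ^ i‖ * ‖M‖ * ‖S ^ i‖ := norm_mul₃_le
    _ = ‖S ^ i‖ * ‖M‖ * ‖S ^ i‖ := by rw [← transpose_pow, frobenius_norm_transpose]
    _ ≤ (r : ℝ) ^ i * ‖M‖ * (r : ℝ) ^ i := by gcongr
    _ = ‖M‖ * ((r : ℝ) ^ 2) ^ i := by ring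

end Frobenius

theorem hasSum_of_lyapunov_eq (hS : SchurStable S) {P G : Matrix (Fin k) (Fin k) ℝ}
    (h : Sᵀ * P * S + G = P) : HasSum (fun i : ℕ => Sᵀ ^ i * G * S ^ i) P := by
  refine (hS.summable_transpose_pow_mul_mul_pow G).hasSum_iff_tendsto_nat.mpr ?_
  have hrem := (hS.summable_transpose_pow_mul_mul_pow P).tendsto_atTop_zero
  simpa only [sub_zero, ← eq_sub_of_add_eq (sum_pow_mul_mul_pow_add_pow_mul_mul_pow h _)]
    using tendsto_const_nhds (x := P) |>.sub hrem

end SchurStable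

theorem stmt_2_general {n m d : ℕ}
    (K : Matrix (Fin m) (Fin n) ℝ) (D : Matrix (Fin n) (Fin d) ℝ)
    (γ : ℝ)
    (Q : Matrix (Fin n) (Fin n) ℝ) (R : Matrix (Fin m) (Fin m) ℝ)
    (P : Matrix (Fin n) (Fin n) ℝ)
    (S : Matrix (Fin n) (Fin n) ℝ)
    (hS : SchurStable S)
    (hP : P.PosSemidef)
    (hγP : (γ ^ 2 • (1 : Matrix (Fin d) (Fin d) ℝ) - Dᵀ * P * D).PosDef)
    (Ptil : Matrix (Fin n) (Fin n) ℝ)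
    (hPtil : Ptil = P + P * D * (γ ^ 2 • (1 : Matrix (Fin d) (Fin d) ℝ) - Dᵀ * P * D)⁻¹ * Dᵀ * P)
    (hRic : Sᵀ * Ptil * S + Q + Kᵀ * R * K = P)
    (Pbar : Matrix (Fin n) (Fin n) ℝ)
    (hPbar : Pbar = ∑' i : ℕ, Sᵀ ^ i * (Q + Kᵀ * R * K) * S ^ i) :
    P - Pbar
      = (∑' i : ℕ, Sᵀ ^ (i + 1) *
          (P * D * (γ ^ 2 • (1 : Matrix (Fin d) (Fin d) ℝ) - Dᵀ * P * D)⁻¹ * Dᵀ * P)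
          * S ^ (i + 1)) ∧
    (P - Pbar).PosSemidef := by
  set X := P * D * (γ ^ 2 • (1 : Matrix (Fin d) (Fin d) ℝ) - Dᵀ * P * D)⁻¹ * Dᵀ * P
  have hX : X.PosSemidef := by
    have hPD := hγP.inv.posSemidef.mul_mul_conjTranspose_same (P * D)
    rwa [conjTranspose_mul, hP.1.eq, conjTranspose_eq_transpose_of_trivial, ← Matrix.mul_assoc]
      at hPD
  have hLyap : Sᵀ * P * S + (Q + Kᵀ * R * K + Sᵀ * X * S) = P := by
    rw [hPtil, Matrix.mul_add, Matrix.add_mul] at hRic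
    conv_rhs => rw [← hRic]
    abel
  have hPbarSum : HasSum (fun i : ℕ => Sᵀ ^ i * (Q + Kᵀ * R * K) * S ^ i) Pbar :=
    hPbar ▸ (hS.summable_transpose_pow_mul_mul_pow _).hasSum
  have hDiff : HasSum (fun i : ℕ => Sᵀ ^ (i + 1) * X * S ^ (i + 1)) (P - Pbar) := by
    refine ((hS.hasSum_of_lyapunov_eq hLyap).sub hPbarSum).congr_fun fun i => ?_
    rw [Matrix.mul_add, Matrix.add_mul, add_sub_cancel_left, pow_succ, pow_succ']
    simp only [Matrix.mul_assoc]
  refine ⟨hDiff.tsum_eq.symm, hDiff.posSemidef fun i => ?_⟩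
  simpa [conjTranspose_eq_transpose_of_trivial, transpose_pow]
    using hX.conjTranspose_mul_mul_same (S ^ (i + 1))

/-- Step B of the proof of Theorem 1: if `S := A − BK` is Schur stable,
`P ≥ 0` solves the modified Riccati equation `Sᵀ P̃ S + Q + Kᵀ R K = P` with
`P̃ := P + P D (γ²I − Dᵀ P D)⁻¹ Dᵀ P` and `γ²I − Dᵀ P D > 0`, and
`P̄ := Σ_{i=0}^∞ (Sᵀ)^i (Q + Kᵀ R K) S^i` is the solution of the associated
Lyapunov equation, then
`P − P̄ = Σ_{i=0}^∞ (Sᵀ)^{i+1} (P D (γ²I − Dᵀ P D)⁻¹ Dᵀ P) S^{i+1}`;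
in particular `P − P̄` is positive semidefinite, i.e. `P ≥ P̄`. -/
theorem stmt_2 {n m d : ℕ}
    (A : Matrix (Fin n) (Fin n) ℝ) (B : Matrix (Fin n) (Fin m) ℝ)
    (K : Matrix (Fin m) (Fin n) ℝ) (D : Matrix (Fin n) (Fin d) ℝ)
    (γ : ℝ) (hγ : 0 < γ)
    (Q : Matrix (Fin n) (Fin n) ℝ) (R : Matrix (Fin m) (Fin m) ℝ)
    (P : Matrix (Fin n) (Fin n) ℝ)
    (S : Matrix (Fin n) (Fin n) ℝ) (hSdef : S = A - B * K)
    (hS : SchurStable S)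
    (hQ : Q.PosSemidef) (hR : R.PosSemidef) (hP : P.PosSemidef)
    (hγP : (γ ^ 2 • (1 : Matrix (Fin d) (Fin d) ℝ) - Dᵀ * P * D).PosDef)
    (Ptil : Matrix (Fin n) (Fin n) ℝ)
    (hPtil : Ptil = P + P * D * (γ ^ 2 • (1 : Matrix (Fin d) (Fin d) ℝ) - Dᵀ * P * D)⁻¹ * Dᵀ * P)
    (hRic : Sᵀ * Ptil * S + Q + Kᵀ * R * K = P)
    (Pbar : Matrix (Fin n) (Fin n) ℝ)
    (hPbar : Pbar = ∑' i : ℕ, Sᵀ ^ i * (Q + Kᵀ * R * K) * S ^ i) :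
    P - Pbar
      = (∑' i : ℕ, Sᵀ ^ (i + 1) *
          (P * D * (γ ^ 2 • (1 : Matrix (Fin d) (Fin d) ℝ) - Dᵀ * P * D)⁻¹ * Dᵀ * P)
          * S ^ (i + 1)) ∧
    (P - Pbar).PosSemidef :=
  stmt_2_general K D γ Q R P S hS hP hγP Ptil hPtil hRic Pbar hPbar
end

section
/- Let A be n×n, B n×m, K m×n, D n×d real matrices and γ > 0. Suppose Q̄ is a real symmetric positive definite n×n matrix, R̄ is a real symmetric positive definite m×m matrix, and P is a real symmetric positive semidefinite n×n matrix such that γ²I_d − Dᵀ P D is positive definite and P = (A − BK)ᵀ P̃ (A − BK) + Q̄ + Kᵀ R̄ K, where P̃ := P + P D (γ²I_d − Dᵀ P D)⁻¹ Dᵀ P. Define the updated gain K' := (R̄ + Bᵀ P̃ B)⁻¹ Bᵀ P̃ A. Then A − BK' is Schur stable, i.e. every complex eigenvalue of A − BK' has modulus strictly less than 1. -/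
/-!
Completing the square in the Riccati equation around the updated gain `K'` turns it into
`P - SᵀPS = Sᵀ(P̃ - P)S + K'ᵀR̄K' + (K - K')ᵀ(R̄ + BᵀP̃B)(K - K') + Q̄` for `S = A - BK'`.
The right-hand side is positive definite because `P̃ - P ≥ 0` and `Q̄ > 0`, so `P ≥ 0` is a
Lyapunov matrix for `S`: for an eigenvector `v` with eigenvalue `μ`,
`(1 - |μ|²) v⋆Pv = v⋆(P - SᵀPS)v > 0`, forcing `|μ| < 1`.
-/

open Matrix

namespace Matrix

open ComplexOrder

section Lyapunov

variable {ι 𝕜 : Type*} [Fintype ι] [DecidableEq ι] [RCLike 𝕜]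

theorem norm_lt_one_of_mem_spectrum_of_posDef_sub {S P : Matrix ι ι 𝕜}
    (hP : P.PosSemidef) (hSP : (P - Sᴴ * P * S).PosDef) {μ : 𝕜} (hμ : μ ∈ spectrum 𝕜 S) :
    ‖μ‖ < 1 := by
  rw [← spectrum_toLin', ← Module.End.hasEigenvalue_iff_mem_spectrum] at hμ
  obtain ⟨v, hv⟩ := hμ.exists_hasEigenvector
  have hSv : S *ᵥ v = μ • v := hv.apply_eq_smul
  have hSPS : star v ⬝ᵥ (Sᴴ * P * S) *ᵥ v = ((‖μ‖ ^ 2 : ℝ) : 𝕜) * (star v ⬝ᵥ P *ᵥ v) := by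
    rw [← mulVec_mulVec, ← mulVec_mulVec, dotProduct_mulVec, ← star_mulVec, hSv, star_smul,
      mulVec_smul, smul_dotProduct, dotProduct_smul, smul_smul, smul_eq_mul, RCLike.star_def,
      RCLike.conj_mul, RCLike.ofReal_pow]
  have hpos := hSP.re_dotProduct_pos hv.2
  rw [sub_mulVec, dotProduct_sub, hSPS, ← one_sub_mul, ← RCLike.ofReal_one, ← RCLike.ofReal_sub,
    RCLike.re_ofReal_mul] at hpos
  have hμ2 : ‖μ‖ ^ 2 < 1 := sub_pos.mp (pos_of_mul_pos_left hpos (hP.re_dotProduct_nonneg v))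
  exact (pow_lt_one_iff_of_nonneg (norm_nonneg μ) two_ne_zero).mp hμ2

end Lyapunov

section Complexification

variable {ι : Type*} [Fintype ι]

theorem PosSemidef.map_ofReal {M : Matrix ι ι ℝ} (hM : M.PosSemidef) :
    (M.map (algebraMap ℝ ℂ)).PosSemidef := by
  classical
  open scoped MatrixOrder in
  obtain ⟨C, rfl⟩ := CStarAlgebra.nonneg_iff_eq_star_mul_self.mp hM.nonneg
  rw [star_eq_conjTranspose, Matrix.map_mul,
    conjTranspose_map (algebraMap ℝ ℂ) fun x => (Complex.conj_ofReal x).symm]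
  exact posSemidef_conjTranspose_mul_self _

theorem PosDef.map_ofReal [DecidableEq ι] {M : Matrix ι ι ℝ} (hM : M.PosDef) :
    (M.map (algebraMap ℝ ℂ)).PosDef := by
  rw [hM.posSemidef.map_ofReal.posDef_iff_det_ne_zero, ← RingHom.mapMatrix_apply,
    ← RingHom.map_det]
  simpa using hM.det_pos.ne'

end Complexification

section TrivialStar

variable {n m R : Type*} [Fintype n] [Ring R] [PartialOrder R] [StarRing R] [TrivialStar R]

omit [Fintype n] in
theorem PosSemidef.isSymm {A : Matrix n n R} (hA : A.PosSemidef) : A.IsSymm :=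
  isHermitian_iff_isSymm.mp hA.isHermitian

theorem PosSemidef.transpose_mul_mul_same [Finite m] {A : Matrix n n R} (hA : A.PosSemidef)
    (B : Matrix n m R) : (Bᵀ * A * B).PosSemidef := by
  simpa using hA.conjTranspose_mul_mul_same B

theorem PosSemidef.mul_mul_transpose_same [Finite m] {A : Matrix n n R} (hA : A.PosSemidef)
    (B : Matrix m n R) : (B * A * Bᵀ).PosSemidef := by
  simpa using hA.mul_mul_conjTranspose_same B

end TrivialStar

theorem posSemidef_mul_mul_inv_mul_transpose_mul {n d : Type*} [Fintype n] [Fintype d]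
    [DecidableEq d] {P : Matrix n n ℝ} (hP : P.IsSymm) (D : Matrix n d ℝ) {Δ : Matrix d d ℝ}
    (hΔ : Δ.PosDef) : (P * D * Δ⁻¹ * Dᵀ * P).PosSemidef := by
  simpa [Matrix.mul_assoc, hP.eq] using hΔ.inv.posSemidef.mul_mul_transpose_same (P * D)

section Riccati

variable {α n m : Type*} [CommRing α] [Fintype n] [Fintype m]
  {W : Matrix n n α} {R : Matrix m m α} {A : Matrix n n α} {B : Matrix n m α}
  {K K' : Matrix m n α}

theorem riccati_gain_orthogonal [DecidableEq m] (hG : IsUnit (R + Bᵀ * W * B).det)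
    (hK' : K' = (R + Bᵀ * W * B)⁻¹ * (Bᵀ * W * A)) : Bᵀ * W * (A - B * K') = R * K' := by
  have hGK' : (R + Bᵀ * W * B) * K' = Bᵀ * W * A := by
    rw [hK', ← Matrix.mul_assoc, mul_nonsing_inv _ hG, Matrix.one_mul]
  rw [Matrix.mul_sub, ← hGK', Matrix.add_mul, ← Matrix.mul_assoc, add_sub_cancel_right]

theorem riccati_complete_square (hW : W.IsSymm) (hR : R.IsSymm)
    (hK' : Bᵀ * W * (A - B * K') = R * K') :
    (A - B * K)ᵀ * W * (A - B * K) + Kᵀ * R * K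
      = (A - B * K')ᵀ * W * (A - B * K') + K'ᵀ * R * K'
        + (K - K')ᵀ * (R + Bᵀ * W * B) * (K - K') := by
  have hK't : (A - B * K')ᵀ * W * B = K'ᵀ * R := by
    simpa [Matrix.mul_assoc, hW.eq, hR.eq] using congrArg transpose hK'
  calc (A - B * K)ᵀ * W * (A - B * K) + Kᵀ * R * K
      = (A - B * K')ᵀ * W * (A - B * K') + K'ᵀ * R * K'
          + (K - K')ᵀ * (R + Bᵀ * W * B) * (K - K')
          - ((A - B * K')ᵀ * W * B - K'ᵀ * R) * (K - K')
          - (K - K')ᵀ * (Bᵀ * W * (A - B * K') - R * K') := by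
        simp only [transpose_sub, transpose_mul, Matrix.sub_mul, Matrix.mul_sub,
          Matrix.add_mul, Matrix.mul_add, Matrix.mul_assoc]
        abel
    _ = _ := by
        rw [hK', hK't, sub_self, sub_self, Matrix.zero_mul, Matrix.mul_zero, sub_zero, sub_zero]

theorem riccati_lyapunov_identity {P Q : Matrix n n α} (hW : W.IsSymm) (hR : R.IsSymm)
    (hK' : Bᵀ * W * (A - B * K') = R * K')
    (hRic : P = (A - B * K)ᵀ * W * (A - B * K) + Q + Kᵀ * R * K) :
    P - (A - B * K')ᵀ * P * (A - B * K')
      = (A - B * K')ᵀ * (W - P) * (A - B * K') + K'ᵀ * R * K'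
        + (K - K')ᵀ * (R + Bᵀ * W * B) * (K - K') + Q := by
  calc P - (A - B * K')ᵀ * P * (A - B * K')
      = ((A - B * K)ᵀ * W * (A - B * K) + Kᵀ * R * K) + Q
          - (A - B * K')ᵀ * P * (A - B * K') := by
        nth_rewrite 1 [hRic]; abel
    _ = _ := by
        rw [riccati_complete_square hW hR hK', Matrix.mul_sub _ W P, Matrix.sub_mul]; abel

end Riccati

end Matrix

theorem SchurStable.of_posDef_sub {k : ℕ} {S P : Matrix (Fin k) (Fin k) ℝ}
    (hP : P.PosSemidef) (hSP : (P - Sᵀ * P * S).PosDef) : SchurStable S := by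
  have hmap : (P - Sᵀ * P * S).map (algebraMap ℝ ℂ)
      = P.map (algebraMap ℝ ℂ) - (S.map (algebraMap ℝ ℂ))ᴴ * P.map (algebraMap ℝ ℂ)
          * S.map (algebraMap ℝ ℂ) := by
    rw [Matrix.map_sub _ (map_sub _), Matrix.map_mul, Matrix.map_mul,
      ← conjTranspose_eq_transpose_of_trivial, conjTranspose_map (algebraMap ℝ ℂ) fun x => (Complex.conj_ofReal x).symm]
  intro μ hμ
  exact norm_lt_one_of_mem_spectrum_of_posDef_sub hP.map_ofReal (hmap ▸ hSP.map_ofReal) hμ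

theorem stmt_4_general {n m d : ℕ}
    (A : Matrix (Fin n) (Fin n) ℝ) (B : Matrix (Fin n) (Fin m) ℝ)
    (K : Matrix (Fin m) (Fin n) ℝ) (D : Matrix (Fin n) (Fin d) ℝ)
    (γ : ℝ)
    (Qbar : Matrix (Fin n) (Fin n) ℝ) (hQ : Qbar.PosDef)
    (Rbar : Matrix (Fin m) (Fin m) ℝ) (hR : Rbar.PosDef)
    (P : Matrix (Fin n) (Fin n) ℝ) (hP : P.PosSemidef)
    (hγP : (γ ^ 2 • (1 : Matrix (Fin d) (Fin d) ℝ) - Dᵀ * P * D).PosDef)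
    (Ptil : Matrix (Fin n) (Fin n) ℝ)
    (hPtil : Ptil = P + P * D * (γ ^ 2 • (1 : Matrix (Fin d) (Fin d) ℝ) - Dᵀ * P * D)⁻¹ * Dᵀ * P)
    (hRic : P = (A - B * K)ᵀ * Ptil * (A - B * K) + Qbar + Kᵀ * Rbar * K)
    (K' : Matrix (Fin m) (Fin n) ℝ)
    (hK' : K' = (Rbar + Bᵀ * Ptil * B)⁻¹ * (Bᵀ * Ptil * A)) :
    SchurStable (A - B * K') := by
  have hcorr : (Ptil - P).PosSemidef := by
    rw [hPtil, add_sub_cancel_left]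
    exact posSemidef_mul_mul_inv_mul_transpose_mul hP.isSymm D hγP
  have hPtil_psd : Ptil.PosSemidef := by simpa using hP.add hcorr
  have hG : (Rbar + Bᵀ * Ptil * B).PosDef :=
    hR.add_posSemidef (hPtil_psd.transpose_mul_mul_same B)
  have hK'orth := riccati_gain_orthogonal ((isUnit_iff_isUnit_det _).mp hG.isUnit) hK'
  apply SchurStable.of_posDef_sub hP
  rw [riccati_lyapunov_identity hPtil_psd.isSymm hR.posSemidef.isSymm hK'orth hRic]
  exact PosDef.posSemidef_add (((hcorr.transpose_mul_mul_same _).add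
    (hR.posSemidef.transpose_mul_mul_same _)).add (hG.posSemidef.transpose_mul_mul_same _)) hQ

/-- Step C of the proof of Theorem 1 ('K_{t+1} is stabilizing'): if `Q̄ > 0`,
`R̄ > 0`, `P ≥ 0` solves the modified Riccati equation
`P = (A − BK)ᵀ P̃ (A − BK) + Q̄ + Kᵀ R̄ K` with
`P̃ := P + P D (γ²I − Dᵀ P D)⁻¹ Dᵀ P` and `γ²I − Dᵀ P D > 0`, then the updated
gain `K' := (R̄ + Bᵀ P̃ B)⁻¹ Bᵀ P̃ A` renders `A − BK'` Schur stable. -/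
theorem stmt_4 {n m d : ℕ}
    (A : Matrix (Fin n) (Fin n) ℝ) (B : Matrix (Fin n) (Fin m) ℝ)
    (K : Matrix (Fin m) (Fin n) ℝ) (D : Matrix (Fin n) (Fin d) ℝ)
    (γ : ℝ) (hγ : 0 < γ)
    (Qbar : Matrix (Fin n) (Fin n) ℝ) (hQ : Qbar.PosDef)
    (Rbar : Matrix (Fin m) (Fin m) ℝ) (hR : Rbar.PosDef)
    (P : Matrix (Fin n) (Fin n) ℝ) (hP : P.PosSemidef)
    (hγP : (γ ^ 2 • (1 : Matrix (Fin d) (Fin d) ℝ) - Dᵀ * P * D).PosDef)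
    (Ptil : Matrix (Fin n) (Fin n) ℝ)
    (hPtil : Ptil = P + P * D * (γ ^ 2 • (1 : Matrix (Fin d) (Fin d) ℝ) - Dᵀ * P * D)⁻¹ * Dᵀ * P)
    (hRic : P = (A - B * K)ᵀ * Ptil * (A - B * K) + Qbar + Kᵀ * Rbar * K)
    (K' : Matrix (Fin m) (Fin n) ℝ)
    (hK' : K' = (Rbar + Bᵀ * Ptil * B)⁻¹ * (Bᵀ * Ptil * A)) :
    SchurStable (A - B * K') :=
  stmt_4_general A B K D γ Qbar hQ Rbar hR P hP hγP Ptil hPtil hRic K' hK'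
end

section
/- Let A be n×n, B n×m, and K m×n real matrices such that A − BK is Schur stable. Then there exist κ > 0 and ε ∈ (0,1], an invertible real n×n matrix H, and a real n×n matrix L such that A − BK = H L H⁻¹, ‖L‖ ≤ 1 − ε, ‖H‖·‖H⁻¹‖ ≤ κ, and ‖K‖ ≤ κ; that is, every stabilizing policy K is (κ, ε)-strongly stable for some κ, ε. -/
open Matrix

/-- The spectral norm (operator 2-norm) of a real matrix. -/
noncomputable def specNorm {m n : ℕ} (M : Matrix (Fin m) (Fin n) ℝ) : ℝ :=
  ‖LinearMap.toContinuousLinearMap (Matrix.toEuclideanLin M)‖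

open scoped NNReal ENNReal

/-!
Gelfand's formula, run on the complexification of `S = A - BK` with the Frobenius norm (which
ignores complexification and dominates the spectral norm), gives `θ < 1` and `N ≥ 1` with
`‖S ^ N‖ ≤ θ ^ N`. For `T = θ⁻¹ S` the form `q z = ∑_{k<N} |T ^ k z|²` satisfies
`q (T z) = q z - |z|² + |T ^ N z|² ≤ q z`, so `T` is a contraction for the Euclidean structure
`q = |R ·|²` with `R = √P`, `P` the Gram matrix of `q`. Hence `L = R S R⁻¹` has `‖L‖ ≤ θ`,
and `H = R⁻¹`; `κ` only has to bound `‖H‖ ‖H⁻¹‖` and `‖K‖`.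
-/

theorem specNorm_nonneg {m n : ℕ} (M : Matrix (Fin m) (Fin n) ℝ) : 0 ≤ specNorm M :=
  norm_nonneg _

theorem EuclideanSpace.real_norm_toLp_sq {ι : Type*} [Fintype ι] (x : ι → ℝ) :
    ‖WithLp.toLp 2 x‖ ^ 2 = x ⬝ᵥ x := by
  rw [EuclideanSpace.real_norm_sq_eq]
  simp [dotProduct, sq]

theorem specNorm_le_one_iff {m n : ℕ} {G : Matrix (Fin m) (Fin n) ℝ} :
    specNorm G ≤ 1 ↔ ∀ x, (G *ᵥ x) ⬝ᵥ (G *ᵥ x) ≤ x ⬝ᵥ x := by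
  rw [specNorm, ContinuousLinearMap.opNorm_le_iff zero_le_one,
    (WithLp.equiv 2 _).forall_congr_left]
  refine forall_congr' fun x => ?_
  rw [one_mul, ← EuclideanSpace.real_norm_toLp_sq, ← EuclideanSpace.real_norm_toLp_sq,
    sq_le_sq₀ (norm_nonneg _) (norm_nonneg _)]
  rfl

theorem specNorm_smul {m n : ℕ} (c : ℝ) (M : Matrix (Fin m) (Fin n) ℝ) :
    specNorm (c • M) = |c| * specNorm M := by
  simp [specNorm, norm_smul]

theorem spectrum.eventually_nnnorm_pow_lt_pow {A : Type*} [NormedRing A] [NormedAlgebra ℂ A]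
    [CompleteSpace A] {a : A} {r : ℝ≥0} (h : spectralRadius ℂ a < r) :
    ∀ᶠ N in Filter.atTop, ‖a ^ N‖₊ < r ^ N := by
  filter_upwards [(pow_nnnorm_pow_one_div_tendsto_nhds_spectralRadius a).eventually_lt_const h,
    Filter.eventually_gt_atTop 0] with N hN hN0
  rw [one_div, ENNReal.rpow_inv_lt_iff (by positivity), ENNReal.rpow_natCast] at hN
  exact_mod_cast hN

section Frobenius

attribute [local instance] Matrix.frobeniusNormedAddCommGroup Matrix.frobeniusNormedRing
  Matrix.frobeniusNormedAlgebra

theorem specNorm_le_frobenius_norm {m n : ℕ} (G : Matrix (Fin m) (Fin n) ℝ) :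
    specNorm G ≤ ‖G‖ := by
  refine ContinuousLinearMap.opNorm_le_bound _ (norm_nonneg G) fun v => ?_
  calc ‖(LinearMap.toContinuousLinearMap (toEuclideanLin G)) v‖
      = ‖G * replicateCol Unit v.ofLp‖ := by
        rw [← replicateCol_mulVec, frobenius_norm_replicateCol]; rfl
    _ ≤ ‖G‖ * ‖replicateCol Unit v.ofLp‖ := frobenius_norm_mul _ _
    _ = ‖G‖ * ‖v‖ := by rw [frobenius_norm_replicateCol]

theorem SchurStable.spectralRadius_lt_one_s5 {n : ℕ} {S : Matrix (Fin n) (Fin n) ℝ}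
    (hS : SchurStable S) : spectralRadius ℂ (S.map (algebraMap ℝ ℂ)) < 1 := by
  rcases (spectrum ℂ (S.map (algebraMap ℝ ℂ))).eq_empty_or_nonempty with h | h
  · rw [spectralRadius, h]
    simp
  · exact_mod_cast spectrum.spectralRadius_lt_of_forall_lt_of_nonempty h (r := 1)
      fun μ hμ => by exact_mod_cast hS μ hμ

theorem SchurStable.exists_specNorm_pow_le {n : ℕ} {S : Matrix (Fin n) (Fin n) ℝ}
    (hS : SchurStable S) :
    ∃ θ : ℝ, 0 < θ ∧ θ < 1 ∧ ∃ N : ℕ, 0 < N ∧ specNorm (S ^ N) ≤ θ ^ N := by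
  obtain ⟨θ, hρθ, hθ1⟩ := ENNReal.lt_iff_exists_nnreal_btwn.mp hS.spectralRadius_lt_one_s5
  obtain ⟨N, hN, hN0⟩ :=
    ((spectrum.eventually_nnnorm_pow_lt_pow hρθ).and (Filter.eventually_gt_atTop 0)).exists
  have hθ0 : (0 : ℝ≥0∞) < θ := bot_le.trans_lt hρθ
  refine ⟨θ, by exact_mod_cast hθ0, by exact_mod_cast hθ1, N, hN0, ?_⟩
  calc specNorm (S ^ N) ≤ ‖S ^ N‖ := specNorm_le_frobenius_norm _
    _ = ‖(S.map (algebraMap ℝ ℂ)) ^ N‖ := by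
        rw [← Matrix.map_pow]
        exact (frobenius_norm_map_eq _ _ fun a => Complex.norm_real a).symm
    _ ≤ θ ^ N := by exact_mod_cast hN.le

end Frobenius

theorem dotProduct_transpose_mul_self_mulVec {R m n : Type*} [CommSemiring R] [Fintype m]
    [Fintype n] (M : Matrix m n R) (z : n → R) :
    z ⬝ᵥ (Mᵀ * M) *ᵥ z = (M *ᵥ z) ⬝ᵥ (M *ᵥ z) := by
  rw [← mulVec_mulVec, dotProduct_mulVec, vecMul_transpose]

theorem exists_posDef_lyapunov_of_specNorm_pow_le_one {n N : ℕ}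
    {T : Matrix (Fin n) (Fin n) ℝ} (hN : 0 < N) (hT : specNorm (T ^ N) ≤ 1) :
    ∃ P : Matrix (Fin n) (Fin n) ℝ, P.PosDef ∧
      ∀ z, (T *ᵥ z) ⬝ᵥ P *ᵥ (T *ᵥ z) ≤ z ⬝ᵥ P *ᵥ z := by
  set P := ∑ k ∈ Finset.range N, (T ^ k)ᵀ * T ^ k
  set f : (Fin n → ℝ) → ℕ → ℝ := fun z k => (T ^ k *ᵥ z) ⬝ᵥ (T ^ k *ᵥ z)
  have hquad (z) : z ⬝ᵥ P *ᵥ z = ∑ k ∈ Finset.range N, f z k := by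
    simp only [P, f, sum_mulVec, dotProduct_sum, dotProduct_transpose_mul_self_mulVec]
  have hf_nonneg (z k) : 0 ≤ f z k := by simpa using dotProduct_self_star_nonneg (T ^ k *ᵥ z)
  refine ⟨P, .of_dotProduct_mulVec_pos ?_ fun x hx => ?_, fun z => ?_⟩
  · have hsum := posSemidef_sum (Finset.range N) fun k _ =>
      posSemidef_conjTranspose_mul_self (T ^ k)
    simpa [P, conjTranspose_eq_transpose_of_trivial] using hsum.isHermitian
  · have hx0 : 0 < f x 0 := by simpa [f] using dotProduct_self_star_pos_iff.mpr hx
    rw [star_trivial, hquad]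
    exact hx0.trans_le <|
      Finset.single_le_sum (fun k _ => hf_nonneg x k) (Finset.mem_range.mpr hN)
  · have hshift (k) : f (T *ᵥ z) k = f z (k + 1) := by
      simp only [f, mulVec_mulVec, ← pow_succ]
    have htele : ∑ k ∈ Finset.range N, f z (k + 1) + f z 0
        = ∑ k ∈ Finset.range N, f z k + f z N := by
      rw [← Finset.sum_range_succ', Finset.sum_range_succ]
    have hfN : f z N ≤ f z 0 := by simpa [f] using specNorm_le_one_iff.mp hT z
    simp only [hquad, hshift]
    linarith

open scoped MatrixOrder Matrix.Norms.L2Operator in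
theorem Matrix.PosDef.exists_isUnit_transpose_mul_self_eq {ι : Type*} [Fintype ι]
    [DecidableEq ι] {P : Matrix ι ι ℝ} (hP : P.PosDef) :
    ∃ R : Matrix ι ι ℝ, IsUnit R ∧ Rᵀ * R = P := by
  refine ⟨CFC.sqrt P, (CFC.isUnit_sqrt_iff P hP.posSemidef.nonneg).mpr hP.isUnit, ?_⟩
  rw [← conjTranspose_eq_transpose_of_trivial, (CFC.sqrt_nonneg P).posSemidef.isHermitian.eq,
    CFC.sqrt_mul_sqrt_self P hP.posSemidef.nonneg]

theorem specNorm_conj_le_one {n : ℕ} {T R : Matrix (Fin n) (Fin n) ℝ} (hR : IsUnit R)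
    (hTR : ∀ z, (T *ᵥ z) ⬝ᵥ (Rᵀ * R) *ᵥ (T *ᵥ z) ≤ z ⬝ᵥ (Rᵀ * R) *ᵥ z) :
    specNorm (R * T * R⁻¹) ≤ 1 := by
  refine specNorm_le_one_iff.mpr fun x => ?_
  have hx : R *ᵥ R⁻¹ *ᵥ x = x := by
    rw [mulVec_mulVec, mul_nonsing_inv _ ((isUnit_iff_isUnit_det R).mp hR), one_mulVec]
  have := hTR (R⁻¹ *ᵥ x)
  rw [dotProduct_transpose_mul_self_mulVec, dotProduct_transpose_mul_self_mulVec, hx] at this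
  simpa only [mulVec_mulVec, Matrix.mul_assoc] using this

theorem SchurStable.exists_similar_specNorm_lt_one {n : ℕ} {S : Matrix (Fin n) (Fin n) ℝ}
    (hS : SchurStable S) :
    ∃ H L : Matrix (Fin n) (Fin n) ℝ, IsUnit H ∧ S = H * L * H⁻¹ ∧ specNorm L < 1 := by
  obtain ⟨θ, hθ0, hθ1, N, hN, hSN⟩ := hS.exists_specNorm_pow_le
  have hTN : specNorm ((θ⁻¹ • S) ^ N) ≤ 1 := by
    rw [smul_pow, specNorm_smul, inv_pow, abs_of_pos (by positivity)]
    exact inv_mul_le_one_of_le₀ hSN (by positivity)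
  obtain ⟨P, hP, hTP⟩ := exists_posDef_lyapunov_of_specNorm_pow_le_one hN hTN
  obtain ⟨R, hR, rfl⟩ := hP.exists_isUnit_transpose_mul_self_eq
  have hRdet := (isUnit_iff_isUnit_det R).mp hR
  refine ⟨R⁻¹, R * S * R⁻¹, isUnit_nonsing_inv_iff.mpr hR, ?_, ?_⟩
  · simp only [nonsing_inv_nonsing_inv R hRdet, Matrix.mul_assoc, nonsing_inv_mul _ hRdet,
      mul_one, nonsing_inv_mul_cancel_left _ _ hRdet]
  · have hT := specNorm_conj_le_one hR hTP
    rw [Matrix.mul_smul, Matrix.smul_mul, specNorm_smul, abs_of_pos (inv_pos.mpr hθ0)] at hT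
    calc specNorm (R * S * R⁻¹) ≤ θ := by rwa [inv_mul_le_iff₀ hθ0, mul_one] at hT
      _ < 1 := hθ1

/-- Proposition 1 of the paper: every stabilizing policy `K` (i.e. one with
`A − BK` Schur stable) is `(κ, ε)`-strongly stable for some `κ > 0` and
`ε ∈ (0,1]`: there are matrices `H` (invertible) and `L` with
`A − BK = H L H⁻¹`, `‖L‖ ≤ 1 − ε`, `‖H‖·‖H⁻¹‖ ≤ κ`, and `‖K‖ ≤ κ`. -/
theorem stmt_5 {n m : ℕ}
    (A : Matrix (Fin n) (Fin n) ℝ) (B : Matrix (Fin n) (Fin m) ℝ)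
    (K : Matrix (Fin m) (Fin n) ℝ)
    (hS : SchurStable (A - B * K)) :
    ∃ κ > (0 : ℝ), ∃ ε : ℝ, 0 < ε ∧ ε ≤ 1 ∧
      ∃ H L : Matrix (Fin n) (Fin n) ℝ, IsUnit H ∧
        A - B * K = H * L * H⁻¹ ∧
        specNorm L ≤ 1 - ε ∧
        specNorm H * specNorm H⁻¹ ≤ κ ∧
        specNorm K ≤ κ := by
  obtain ⟨H, L, hH, hsim, hL⟩ := hS.exists_similar_specNorm_lt_one
  have hL0 := specNorm_nonneg L
  have hK0 := specNorm_nonneg K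
  have hH0 := mul_nonneg (specNorm_nonneg H) (specNorm_nonneg H⁻¹)
  refine ⟨specNorm H * specNorm H⁻¹ + specNorm K + 1, by positivity, 1 - specNorm L,
    by linarith, by linarith, H, L, hH, hsim, by linarith, by linarith, by linarith⟩
end

section
/- Let 0 < μ ≤ ν, P a real symmetric n×n matrix with μI ≤ P ≤ νI, and S a real n×n matrix such that Sᵀ P S ≤ P − μI. Then, writing P^{1/2} for the (unique) symmetric positive definite square root of P, the spectral norm satisfies ‖P^{1/2} S P^{-1/2}‖ ≤ √(1 − μ/ν) ≤ 1 − μ/(2ν). -/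
/-!
With `y = P^{-1/2} x`, the quantity `‖P^{1/2} S P^{-1/2} x‖²` is the quadratic form `yᵀ Sᵀ P S y`
and `‖x‖² = yᵀ P y`. The Lyapunov inequality gives `yᵀ Sᵀ P S y ≤ yᵀ P y - μ ‖y‖²`, and `P ≤ νI`
gives `‖y‖² ≥ yᵀ P y / ν`, so the ratio is at most `1 - μ/ν`. The second inequality is
`√(1 - x) ≤ 1 - x/2`, i.e. `(1 - x/2)² = 1 - x + x²/4`.
-/

open Matrix

lemma EuclideanSpace.real_norm_sq_eq_dotProduct {ι : Type*} [Fintype ι]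
    (x : EuclideanSpace ℝ ι) : ‖x‖ ^ 2 = x.ofLp ⬝ᵥ x.ofLp := by
  rw [← real_inner_self_eq_norm_sq, EuclideanSpace.inner_eq_star_dotProduct, star_trivial]

lemma Matrix.dotProduct_mulVec_self {m n : Type*} [Fintype m] [Fintype n]
    (A : Matrix m n ℝ) (y : n → ℝ) :
    (A *ᵥ y) ⬝ᵥ (A *ᵥ y) = y ⬝ᵥ ((Aᵀ * A) *ᵥ y) := by
  rw [← mulVec_mulVec, dotProduct_mulVec (A := Aᵀ), vecMul_transpose]

lemma specNorm_le_of_dotProduct_le {m n : ℕ} (A : Matrix (Fin m) (Fin n) ℝ) {c : ℝ}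
    (hc : 0 ≤ c) (h : ∀ x, (A *ᵥ x) ⬝ᵥ (A *ᵥ x) ≤ c ^ 2 * (x ⬝ᵥ x)) : specNorm A ≤ c := by
  refine ContinuousLinearMap.opNorm_le_bound _ hc fun v => ?_
  refine (pow_le_pow_iff_left₀ (norm_nonneg _) (by positivity) two_ne_zero).mp ?_
  rw [mul_pow, EuclideanSpace.real_norm_sq_eq_dotProduct,
    EuclideanSpace.real_norm_sq_eq_dotProduct]
  exact h v.ofLp

lemma specNorm_mul_mul_inv_le_of_dotProduct_le {n : ℕ} {H P : Matrix (Fin n) (Fin n) ℝ}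
    (hH : H.PosDef) (hHP : H * H = P) (S : Matrix (Fin n) (Fin n) ℝ) {c : ℝ} (hc : 0 ≤ c)
    (h : ∀ y, y ⬝ᵥ ((Sᵀ * P * S) *ᵥ y) ≤ c ^ 2 * (y ⬝ᵥ (P *ᵥ y))) :
    specNorm (H * S * H⁻¹) ≤ c := by
  have hHT : Hᵀ = H := hH.isHermitian
  have hP : P = Hᵀ * H := by rw [hHT, hHP]
  have hSPS : Sᵀ * P * S = (H * S)ᵀ * (H * S) := by
    rw [hP, transpose_mul, Matrix.mul_assoc, Matrix.mul_assoc, Matrix.mul_assoc]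
  refine specNorm_le_of_dotProduct_le _ hc fun x => ?_
  have hx : H *ᵥ (H⁻¹ *ᵥ x) = x := by
    rw [mulVec_mulVec, mul_nonsing_inv _ hH.det_pos.ne'.isUnit, one_mulVec]
  have hy := h (H⁻¹ *ᵥ x)
  rwa [hSPS, hP, ← dotProduct_mulVec_self, ← dotProduct_mulVec_self, hx, mulVec_mulVec] at hy

lemma le_one_sub_div_mul {μ ν a b t : ℝ} (hμ : 0 ≤ μ) (hν : 0 < ν)
    (hb : b ≤ a - μ * t) (ha : a ≤ ν * t) : b ≤ (1 - μ / ν) * a := by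
  have : μ / ν * a ≤ μ * t := by
    rw [div_mul_eq_mul_div, div_le_iff₀ hν]
    nlinarith
  linarith

lemma Real.sqrt_one_sub_le {x : ℝ} (hx : x ≤ 2) : √(1 - x) ≤ 1 - x / 2 :=
  Real.sqrt_le_iff.mpr ⟨by linarith, by nlinarith [sq_nonneg x]⟩

theorem stmt_7_general {n : ℕ} (μ ν : ℝ) (hμ : 0 < μ) (hμν : μ ≤ ν)
    (P : Matrix (Fin n) (Fin n) ℝ)
    (hPν : (ν • (1 : Matrix (Fin n) (Fin n) ℝ) - P).PosSemidef)
    (S : Matrix (Fin n) (Fin n) ℝ)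
    (hLyap : (P - μ • (1 : Matrix (Fin n) (Fin n) ℝ) - Sᵀ * P * S).PosSemidef)
    (Phalf : Matrix (Fin n) (Fin n) ℝ) (hPhalf : Phalf.PosDef)
    (hPhalfSq : Phalf * Phalf = P) :
    specNorm (Phalf * S * Phalf⁻¹) ≤ Real.sqrt (1 - μ / ν) ∧
    Real.sqrt (1 - μ / ν) ≤ 1 - μ / (2 * ν) := by
  have hν : 0 < ν := hμ.trans_le hμν
  have hratio : μ / ν ≤ 1 := (div_le_one hν).mpr hμν
  refine ⟨specNorm_mul_mul_inv_le_of_dotProduct_le hPhalf hPhalfSq S (Real.sqrt_nonneg _)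
    fun y => ?_, ?_⟩
  · have hlyap := hLyap.dotProduct_mulVec_nonneg y
    have hupper := hPν.dotProduct_mulVec_nonneg y
    simp only [star_trivial, sub_mulVec, smul_mulVec, one_mulVec, dotProduct_sub,
      dotProduct_smul, smul_eq_mul, sub_nonneg] at hlyap hupper
    rw [Real.sq_sqrt (by linarith)]
    exact le_one_sub_div_mul hμ.le hν (by linarith) hupper
  · rw [div_mul_eq_div_div_swap]
    exact Real.sqrt_one_sub_le (by linarith)

/-- The contraction estimate behind Proposition 2: if `0 < μ ≤ ν`,
`μI ≤ P ≤ νI` with `P` symmetric, and `Sᵀ P S ≤ P − μI`, then for the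
(unique) symmetric positive definite square root `P^{1/2}` of `P`,
`‖P^{1/2} S P^{-1/2}‖ ≤ √(1 − μ/ν) ≤ 1 − μ/(2ν)`. -/
theorem stmt_7 {n : ℕ} (μ ν : ℝ) (hμ : 0 < μ) (hμν : μ ≤ ν)
    (P : Matrix (Fin n) (Fin n) ℝ) (hPsymm : P.IsSymm)
    (hPμ : (P - μ • (1 : Matrix (Fin n) (Fin n) ℝ)).PosSemidef)
    (hPν : (ν • (1 : Matrix (Fin n) (Fin n) ℝ) - P).PosSemidef)
    (S : Matrix (Fin n) (Fin n) ℝ)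
    (hLyap : (P - μ • (1 : Matrix (Fin n) (Fin n) ℝ) - Sᵀ * P * S).PosSemidef)
    (Phalf : Matrix (Fin n) (Fin n) ℝ) (hPhalf : Phalf.PosDef)
    (hPhalfSq : Phalf * Phalf = P) :
    specNorm (Phalf * S * Phalf⁻¹) ≤ Real.sqrt (1 - μ / ν) ∧
    Real.sqrt (1 - μ / ν) ≤ 1 - μ / (2 * ν) :=
  stmt_7_general μ ν hμ hμν P hPν S hLyap Phalf hPhalf hPhalfSq
end

section
/- Let 0 < μ ≤ ν and let P, P' be real symmetric n×n matrices with μI ≤ P ≤ νI, μI ≤ P' ≤ νI, and spectral norm ‖P − P'‖ ≤ μ²/ν. Then, writing M^{1/2} for the symmetric positive definite square root, ‖P'^{-1/2} P^{1/2}‖ ≤ 1 + μ/(2ν). -/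
/-!
Write `A = P'^{-1/2} P^{1/2}`. Since both square roots are symmetric,
`A Aᵀ = P'^{-1/2} P P'^{-1/2} = 1 + P'^{-1/2} (P - P') P'^{-1/2}`, and `‖P'^{-1/2}‖² = ‖P'⁻¹‖ ≤ 1/μ`
because `P' ≥ μ`. Hence `‖A‖² = ‖A Aᵀ‖ ≤ 1 + (μ²/ν)/μ = 1 + μ/ν ≤ (1 + μ/(2ν))²`.
-/

open Matrix

open scoped Matrix.Norms.L2Operator RealInnerProductSpace

lemma specNorm_eq_l2_opNorm {m n : ℕ} (M : Matrix (Fin m) (Fin n) ℝ) : specNorm M = ‖M‖ := rfl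

namespace Matrix

variable {n : Type*} [Fintype n] [DecidableEq n]

section RCLike

variable {𝕜 : Type*} [RCLike 𝕜]

lemma l2_opNorm_mul_conjTranspose_self {m : Type*} [Fintype m] [DecidableEq m]
    (A : Matrix m n 𝕜) : ‖A * Aᴴ‖ = ‖A‖ * ‖A‖ := by
  rw [← l2_opNorm_conjTranspose A, ← l2_opNorm_conjTranspose_mul_self, conjTranspose_conjTranspose]

lemma l2_opNorm_one_le : ‖(1 : Matrix n n 𝕜)‖ ≤ 1 := by
  rw [cstar_norm_def, map_one]
  exact ContinuousLinearMap.norm_id_le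

lemma l2_opNorm_inv_mul_self_of_isHermitian {H : Matrix n n 𝕜} (hH : H.IsHermitian) :
    ‖H⁻¹‖ * ‖H⁻¹‖ = ‖(H * H)⁻¹‖ := by
  rw [← l2_opNorm_conjTranspose_mul_self, conjTranspose_nonsing_inv, hH.eq, mul_inv_rev]

end RCLike

lemma mul_norm_le_norm_toEuclideanCLM {M : Matrix n n ℝ} {μ : ℝ}
    (hM : (M - μ • 1).PosSemidef) (x : EuclideanSpace ℝ n) :
    μ * ‖x‖ ≤ ‖toEuclideanCLM (𝕜 := ℝ) M x‖ := by
  rcases eq_or_ne x 0 with rfl | hx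
  · simp
  have hquad : μ * ‖x‖ * ‖x‖ ≤ ⟪x, toEuclideanCLM (𝕜 := ℝ) M x⟫ := by
    have := hM.dotProduct_mulVec_nonneg (WithLp.ofLp x)
    rw [inner_toEuclideanCLM, mul_assoc, ← real_inner_self_eq_norm_mul_norm,
      EuclideanSpace.inner_eq_star_dotProduct]
    simpa only [star_trivial, sub_mulVec, smul_mulVec, one_mulVec, dotProduct_sub,
      dotProduct_smul, smul_eq_mul, sub_nonneg] using this
  have hbound : μ * ‖x‖ * ‖x‖ ≤ ‖toEuclideanCLM (𝕜 := ℝ) M x‖ * ‖x‖ := calc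
    μ * ‖x‖ * ‖x‖ ≤ ⟪x, toEuclideanCLM (𝕜 := ℝ) M x⟫ := hquad
    _ ≤ ‖x‖ * ‖toEuclideanCLM (𝕜 := ℝ) M x‖ := real_inner_le_norm _ _
    _ = _ := mul_comm _ _
  exact le_of_mul_le_mul_right hbound (norm_pos_iff.mpr hx)

lemma l2_opNorm_inv_le {M : Matrix n n ℝ} {μ : ℝ} (hμ : 0 < μ)
    (hM : (M - μ • 1).PosSemidef) : ‖M⁻¹‖ ≤ μ⁻¹ := by
  have hM_posDef : M.PosDef := by simpa using PosDef.posSemidef_add hM (PosDef.one.smul hμ)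
  have hM_inv : M * M⁻¹ = 1 := mul_nonsing_inv _ ((isUnit_iff_isUnit_det M).mp hM_posDef.isUnit)
  refine ContinuousLinearMap.opNorm_le_bound _ (inv_nonneg.mpr hμ.le) fun x => ?_
  rw [inv_mul_eq_div, le_div_iff₀' hμ]
  calc μ * ‖toEuclideanCLM (𝕜 := ℝ) M⁻¹ x‖
      ≤ ‖toEuclideanCLM (𝕜 := ℝ) M (toEuclideanCLM (𝕜 := ℝ) M⁻¹ x)‖ :=
        mul_norm_le_norm_toEuclideanCLM hM _
    _ = ‖x‖ := by rw [← mul_apply_eq_comp, ← map_mul, hM_inv, map_one, one_apply_eq_self]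

lemma inv_mul_mul_conjTranspose_eq_one_add {R : Type*} [CommRing R] [StarRing R]
    {H H' : Matrix n n R} (hH : H.IsHermitian) (hH' : H'.IsHermitian) (hH'det : IsUnit H'.det) :
    H'⁻¹ * H * (H'⁻¹ * H)ᴴ = 1 + H'⁻¹ * (H * H - H' * H') * H'⁻¹ := by
  rw [conjTranspose_mul, conjTranspose_nonsing_inv, hH.eq, hH'.eq]
  calc H'⁻¹ * H * (H * H'⁻¹)
      = H'⁻¹ * (H * H - H' * H') * H'⁻¹ + (H'⁻¹ * H') * (H' * H'⁻¹) := by noncomm_ring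
    _ = _ := by rw [nonsing_inv_mul H' hH'det, mul_nonsing_inv H' hH'det, mul_one, add_comm]

end Matrix

theorem stmt_8_general {n : ℕ} (μ ν : ℝ) (hμ : 0 < μ)
    (P P' : Matrix (Fin n) (Fin n) ℝ)
    (hP'μ : (P' - μ • (1 : Matrix (Fin n) (Fin n) ℝ)).PosSemidef)
    (hdiff : specNorm (P - P') ≤ μ ^ 2 / ν)
    (Phalf : Matrix (Fin n) (Fin n) ℝ) (hPhalf : Phalf.PosDef)
    (hPhalfSq : Phalf * Phalf = P)
    (P'half : Matrix (Fin n) (Fin n) ℝ) (hP'half : P'half.PosDef)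
    (hP'halfSq : P'half * P'half = P') :
    specNorm (P'half⁻¹ * Phalf) ≤ 1 + μ / (2 * ν) := by
  rw [specNorm_eq_l2_opNorm] at hdiff ⊢
  set A := P'half⁻¹ * Phalf
  have hA : A * Aᴴ = 1 + P'half⁻¹ * (P - P') * P'half⁻¹ := by
    rw [← hPhalfSq, ← hP'halfSq]
    exact inv_mul_mul_conjTranspose_eq_one_add hPhalf.isHermitian hP'half.isHermitian
      hP'half.det_pos.ne'.isUnit
  have hinv : ‖P'half⁻¹‖ * ‖P'half⁻¹‖ ≤ μ⁻¹ := by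
    rw [l2_opNorm_inv_mul_self_of_isHermitian hP'half.isHermitian, hP'halfSq]
    exact l2_opNorm_inv_le hμ hP'μ
  have hμν_nonneg : 0 ≤ μ / ν := by
    rw [show μ / ν = μ⁻¹ * (μ ^ 2 / ν) by field_simp]
    exact mul_nonneg (inv_nonneg.mpr hμ.le) ((norm_nonneg _).trans hdiff)
  have hA_sq : ‖A‖ ^ 2 ≤ 1 + μ / ν := calc
    ‖A‖ ^ 2 = ‖A * Aᴴ‖ := by rw [sq, l2_opNorm_mul_conjTranspose_self]
    _ ≤ ‖(1 : Matrix (Fin n) (Fin n) ℝ)‖ + ‖P'half⁻¹‖ * ‖P - P'‖ * ‖P'half⁻¹‖ := by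
      rw [hA]
      refine (norm_add_le _ _).trans (add_le_add_right ?_ _)
      exact (l2_opNorm_mul _ _).trans (by gcongr; exact l2_opNorm_mul _ _)
    _ = ‖(1 : Matrix (Fin n) (Fin n) ℝ)‖ + ‖P'half⁻¹‖ * ‖P'half⁻¹‖ * ‖P - P'‖ := by ring
    _ ≤ 1 + μ⁻¹ * (μ ^ 2 / ν) :=
      add_le_add l2_opNorm_one_le (mul_le_mul hinv hdiff (norm_nonneg _) (inv_nonneg.mpr hμ.le))
    _ = 1 + μ / ν := by field_simp
  have hhalf : μ / ν = 2 * (μ / (2 * ν)) := by ring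
  rw [hhalf] at hμν_nonneg hA_sq
  exact le_of_sq_le_sq (by nlinarith) (by linarith)

/-- The sequential-strong-stability estimate in Proposition 2: if `0 < μ ≤ ν`,
`μI ≤ P ≤ νI`, `μI ≤ P' ≤ νI` (both symmetric), and `‖P − P'‖ ≤ μ²/ν`, then
for the symmetric positive definite square roots `P^{1/2}`, `P'^{1/2}`,
`‖P'^{-1/2} P^{1/2}‖ ≤ 1 + μ/(2ν)`. -/
theorem stmt_8 {n : ℕ} (μ ν : ℝ) (hμ : 0 < μ) (hμν : μ ≤ ν)
    (P P' : Matrix (Fin n) (Fin n) ℝ) (hPsymm : P.IsSymm) (hP'symm : P'.IsSymm)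
    (hPμ : (P - μ • (1 : Matrix (Fin n) (Fin n) ℝ)).PosSemidef)
    (hPν : (ν • (1 : Matrix (Fin n) (Fin n) ℝ) - P).PosSemidef)
    (hP'μ : (P' - μ • (1 : Matrix (Fin n) (Fin n) ℝ)).PosSemidef)
    (hP'ν : (ν • (1 : Matrix (Fin n) (Fin n) ℝ) - P').PosSemidef)
    (hdiff : specNorm (P - P') ≤ μ ^ 2 / ν)
    (Phalf : Matrix (Fin n) (Fin n) ℝ) (hPhalf : Phalf.PosDef)
    (hPhalfSq : Phalf * Phalf = P)
    (P'half : Matrix (Fin n) (Fin n) ℝ) (hP'half : P'half.PosDef)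
    (hP'halfSq : P'half * P'half = P') :
    specNorm (P'half⁻¹ * Phalf) ≤ 1 + μ / (2 * ν) :=
  stmt_8_general μ ν hμ P P' hP'μ hdiff Phalf hPhalf hPhalfSq P'half hP'half hP'halfSq
end

section
/- Let n ≥ 1 and let (P_t)_{t≥1} be a sequence of real symmetric n×n matrices, P* a real symmetric n×n matrix, and N a real symmetric positive semidefinite n×n matrix. Let t* and T be integers with 1 ≤ t* ≤ T, and let p* > 0 and c ≥ 0 be reals such that ‖P_t − P_{t−1}‖ ≤ p*/t for every integer t with t* < t ≤ T and ‖P_{t*} − P*‖ ≤ c. Then Tr(P_T N) − Tr(P* N) ≤ Tr(N) · ( c + p* (log T − log t*) ). -/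
/-!
Telescope `P_T - P*` through `P_{t*}`. For `N ⪰ 0`, writing `N = ∑ vᵢ vᵢᵀ` gives
`Tr(X N) = ∑ vᵢᵀ X vᵢ ≤ ‖X‖ Tr N`, so each increment costs at most `p*/t · Tr N`; and
`1/(t+1) ≤ log (t+1) - log t` bounds the harmonic tail by `log T - log t*`.
-/

open Matrix

open scoped RealInnerProductSpace

lemma dotProduct_mulVec_le_specNorm_mul {n : ℕ} (X : Matrix (Fin n) (Fin n) ℝ) (v : Fin n → ℝ) :
    X *ᵥ v ⬝ᵥ v ≤ specNorm X * (v ⬝ᵥ v) := by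
  set L := LinearMap.toContinuousLinearMap (toEuclideanLin X)
  set w := WithLp.toLp 2 v
  have hXv : X *ᵥ v ⬝ᵥ v = ⟪w, L w⟫ := by
    simp [L, w, EuclideanSpace.inner_eq_star_dotProduct]
  have hvv : v ⬝ᵥ v = ‖w‖ ^ 2 := by
    rw [← real_inner_self_eq_norm_sq, EuclideanSpace.inner_eq_star_dotProduct]
    simp [w]
  calc X *ᵥ v ⬝ᵥ v = ⟪w, L w⟫ := hXv
    _ ≤ ‖w‖ * ‖L w‖ := real_inner_le_norm _ _
    _ ≤ ‖w‖ * (‖L‖ * ‖w‖) := by gcongr; exact L.le_opNorm w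
    _ = specNorm X * (v ⬝ᵥ v) := by rw [hvv, specNorm]; ring

lemma trace_mul_le_specNorm_mul_trace {n : ℕ} (X : Matrix (Fin n) (Fin n) ℝ)
    {N : Matrix (Fin n) (Fin n) ℝ} (hN : N.PosSemidef) :
    (X * N).trace ≤ specNorm X * N.trace := by
  obtain ⟨m, v, rfl⟩ := posSemidef_iff_eq_sum_vecMulVec.mp hN
  simp only [trace_sum, mul_vecMulVec, trace_vecMulVec, star_trivial, Finset.mul_sum]
  exact Finset.sum_le_sum fun i _ => dotProduct_mulVec_le_specNorm_mul X (v i)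

lemma trace_mul_le_of_specNorm_le {n : ℕ} {X N : Matrix (Fin n) (Fin n) ℝ} {a : ℝ}
    (hN : N.PosSemidef) (hX : specNorm X ≤ a) : (X * N).trace ≤ a * N.trace :=
  (trace_mul_le_specNorm_mul_trace X hN).trans (by gcongr; exact hN.trace_nonneg)

lemma inv_add_one_le_log_add_one_sub_log {x : ℝ} (hx : 0 < x) :
    (x + 1)⁻¹ ≤ Real.log (x + 1) - Real.log x := by
  rw [← Real.log_div (by positivity) hx.ne']
  calc (x + 1)⁻¹ = 1 - ((x + 1) / x)⁻¹ := by field_simp; ring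
    _ ≤ Real.log ((x + 1) / x) := Real.one_sub_inv_le_log_of_pos (by positivity)

lemma sum_Ico_inv_add_one_le_log_sub_log {a b : ℕ} (ha : 0 < a) (hab : a ≤ b) :
    ∑ i ∈ Finset.Ico a b, ((i : ℝ) + 1)⁻¹ ≤ Real.log b - Real.log a := by
  rw [← Finset.sum_Ico_sub (fun i : ℕ => Real.log i) hab]
  refine Finset.sum_le_sum fun i hi => ?_
  have hi : (0 : ℝ) < i := Nat.cast_pos.mpr (ha.trans_le (Finset.mem_Ico.mp hi).1)
  push_cast
  exact inv_add_one_le_log_add_one_sub_log hi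

theorem stmt_16_general {n : ℕ}
    (P : ℕ → Matrix (Fin n) (Fin n) ℝ)
    (Pstar : Matrix (Fin n) (Fin n) ℝ)
    (N : Matrix (Fin n) (Fin n) ℝ) (hN : N.PosSemidef)
    (tstar T : ℕ) (htstar : 1 ≤ tstar) (htT : tstar ≤ T)
    (pstar c : ℝ) (hpstar : 0 < pstar)
    (hstep : ∀ t : ℕ, tstar < t → t ≤ T → specNorm (P t - P (t - 1)) ≤ pstar / (t : ℝ))
    (hburn : specNorm (P tstar - Pstar) ≤ c) :
    (P T * N).trace - (Pstar * N).trace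
      ≤ N.trace * (c + pstar * (Real.log (T : ℝ) - Real.log (tstar : ℝ))) := by
  have htelescope : (P T * N).trace - (Pstar * N).trace = ((P tstar - Pstar) * N).trace
      + ∑ i ∈ Finset.Ico tstar T, ((P (i + 1) - P i) * N).trace := by
    simp only [Matrix.sub_mul, trace_sub]
    rw [Finset.sum_Ico_sub (fun i => (P i * N).trace) htT]
    ring
  have hincrement : ∀ i ∈ Finset.Ico tstar T,
      ((P (i + 1) - P i) * N).trace ≤ pstar * ((i : ℝ) + 1)⁻¹ * N.trace := by
    intro i hi
    obtain ⟨hti, hiT⟩ := Finset.mem_Ico.mp hi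
    refine trace_mul_le_of_specNorm_le hN ?_
    simpa [div_eq_mul_inv] using hstep (i + 1) (by omega) (by omega)
  have htrace := hN.trace_nonneg
  calc (P T * N).trace - (Pstar * N).trace
      ≤ c * N.trace + ∑ i ∈ Finset.Ico tstar T, pstar * ((i : ℝ) + 1)⁻¹ * N.trace := by
        rw [htelescope]
        exact add_le_add (trace_mul_le_of_specNorm_le hN hburn) (Finset.sum_le_sum hincrement)
    _ = N.trace * (c + pstar * ∑ i ∈ Finset.Ico tstar T, ((i : ℝ) + 1)⁻¹) := by
        rw [← Finset.sum_mul, ← Finset.mul_sum]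
        ring
    _ ≤ N.trace * (c + pstar * (Real.log T - Real.log tstar)) := by
        gcongr
        exact sum_Ico_inv_add_one_le_log_sub_log htstar htT

/-- The telescoping argument of Theorem 3 (logarithmic regret bound): if
`‖P_t − P_{t−1}‖ ≤ p*/t` for all `t* < t ≤ T` and `‖P_{t*} − P*‖ ≤ c`, then for
any positive semidefinite `N`,
`Tr(P_T N) − Tr(P* N) ≤ Tr(N) (c + p* (log T − log t*))`. -/
theorem stmt_16 {n : ℕ} (hn : 1 ≤ n)
    (P : ℕ → Matrix (Fin n) (Fin n) ℝ)
    (hPsymm : ∀ t, 1 ≤ t → (P t).IsSymm)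
    (Pstar : Matrix (Fin n) (Fin n) ℝ) (hPstar : Pstar.IsSymm)
    (N : Matrix (Fin n) (Fin n) ℝ) (hN : N.PosSemidef)
    (tstar T : ℕ) (htstar : 1 ≤ tstar) (htT : tstar ≤ T)
    (pstar c : ℝ) (hpstar : 0 < pstar) (hc : 0 ≤ c)
    (hstep : ∀ t : ℕ, tstar < t → t ≤ T → specNorm (P t - P (t - 1)) ≤ pstar / (t : ℝ))
    (hburn : specNorm (P tstar - Pstar) ≤ c) :
    (P T * N).trace - (Pstar * N).trace
      ≤ N.trace * (c + pstar * (Real.log (T : ℝ) - Real.log (tstar : ℝ))) :=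
  stmt_16_general P Pstar N hN tstar T htstar htT pstar c hpstar hstep hburn
end
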